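/- arXiv:2207.11204 — 2 statements merged into one kernel-verified Lean document; each statement's English description precedes it below -/
import Mathlib

section
/- Under Assumption 1, if θ := P(S₊ⁱ = 0) > 0 and P(S₊ⁱ < ∞) = 1, then θ⁻¹ = E(Sᵗ) ≤ E(Sⁱ) = 1 + 2·E(S₊ⁱ), where E(Sᵗ) := Σ_{k=1}^∞ k·π_k, and E(Sⁱ) and E(S₊ⁱ) (which may be infinite) are the expectations of Sⁱ and S₊ⁱ. -/
open MeasureTheory Filter Set ENNReal

noncomputable section

/-- The cluster `C(ω) = {t : I_t(ω) = 1}` of a binary process. -/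
def clusterSet {Ω : Type*} (I : ℤ → Ω → Bool) (ω : Ω) : Set ℤ :=
  {t : ℤ | I t ω = true}

/-- Inspected cluster size `Sⁱ(ω) = Σ_{t ∈ ℤ} I_t(ω) ∈ ℕ ∪ {∞}`. -/
def SiFn {Ω : Type*} (I : ℤ → Ω → Bool) (ω : Ω) : ℕ∞ :=
  {t : ℤ | I t ω = true}.encard

/-- Forward inspected cluster size `S₊ⁱ(ω) = Σ_{t ≥ 1} I_t(ω) ∈ ℕ₀ ∪ {∞}`. -/
def SplusFn {Ω : Type*} (I : ℤ → Ω → Bool) (ω : Ω) : ℕ∞ :=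
  {t : ℤ | 0 < t ∧ I t ω = true}.encard

/-- Backward inspected cluster size `S₋ⁱ(ω) = Σ_{t ≤ -1} I_t(ω) ∈ ℕ₀ ∪ {∞}`. -/
def SminusFn {Ω : Type*} (I : ℤ → Ω → Bool) (ω : Ω) : ℕ∞ :=
  {t : ℤ | t < 0 ∧ I t ω = true}.encard

/-!
Under Assumption 1 the law `ν` of the path `t ↦ I_t` is a Palm law on `ℤ`: it only charges paths
with a point at `0`, and restricting `ν` to `{x_k = 1}` and moving the origin to `k` gives `ν`
restricted to `{x_{-k} = 1}`, because both sides are limits of the same stationary probabilities.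
Summed over the position of the next point, this says that moving the origin to the next point of
the cluster preserves `ν`. That move raises `S₋ⁱ` and lowers `S₊ⁱ` by one, so
`P(S₋ⁱ ≥ a + 1, S₊ⁱ ≥ b) = P(S₋ⁱ ≥ a, S₊ⁱ ≥ b + 1)`: hence `S₋ⁱ` and `S₊ⁱ` have the same law, and
`P(Sⁱ = k, S₋ⁱ = j)` is the same `q_k` for all `j < k`, so `P(Sⁱ = k) = k q_k`. Now `∑ k q_k = 1`
and `∑ q_k = θ` give `θ⁻¹ = E(Sᵗ)`, Cauchy–Schwarz gives `θ⁻¹ ≤ ∑ k² q_k = E(Sⁱ)`, and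
`Sⁱ = S₋ⁱ + 1 + S₊ⁱ` gives `E(Sⁱ) = 1 + 2 E(S₊ⁱ)`.
-/

open Function in
lemma MeasureTheory.measure_eq_tsum_inter {α ι : Type*} [MeasurableSpace α] [Countable ι]
    (μ : Measure α) {D : ι → Set α} (hD : Pairwise (Disjoint on D))
    (hDm : ∀ i, MeasurableSet (D i)) {F : Set α} (hF : MeasurableSet F)
    (hFD : ∀ᵐ x ∂μ, x ∈ F → x ∈ ⋃ i, D i) :
    μ F = ∑' i, μ (F ∩ D i) := by
  rw [← measure_iUnion (fun i j hij => (hD hij).mono inter_subset_right inter_subset_right)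
    fun i => hF.inter (hDm i), ← inter_iUnion]
  refine measure_congr (eventuallyEq_set.2 ?_)
  filter_upwards [hFD] with x hx using ⟨fun h => ⟨h, hx h⟩, And.left⟩

lemma MeasureTheory.tsum_measure_setOf_eq_natCast_inter {α : Type*} [MeasurableSpace α]
    (μ : Measure α) {f : α → ℕ∞} (hf : Measurable f) {A : Set α} (hA : MeasurableSet A) :
    ∑' k : ℕ, μ ({x | f x = k} ∩ A) = μ ({x | f x ≠ ⊤} ∩ A) := by
  rw [← measure_iUnion (f := fun k : ℕ => {x | f x = (k : ℕ∞)} ∩ A)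
      (fun i j hij => disjoint_left.2 fun x hi hj => hij (by exact_mod_cast hi.1.symm.trans hj.1))
      fun k => (hf (measurableSet_singleton _)).inter hA,
    ← iUnion_inter]
  congr 2
  ext x
  simp [ENat.ne_top_iff_exists, eq_comm]

lemma MeasureTheory.lintegral_toENNReal_eq_tsum {α : Type*} [MeasurableSpace α] (μ : Measure α)
    {f : α → ℕ∞} (hf : Measurable f) (htop : μ {x | f x = ⊤} = 0) :
    ∫⁻ x, (f x : ℝ≥0∞) ∂μ = ∑' k : ℕ, (k : ℝ≥0∞) * μ {x | f x = k} := by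
  rw [← lintegral_map (f := fun n : ℕ∞ => (n : ℝ≥0∞)) Measurable.of_discrete hf,
    lintegral_countable',
    ← Nat.cast_injective.tsum_eq (f := fun n : ℕ∞ => (n : ℝ≥0∞) * μ.map f {n})]
  · simp_rw [Measure.map_apply hf (measurableSet_singleton _)]
    rfl
  · intro n hn
    induction n using ENat.recTopCoe with
    | top =>
      rw [Function.mem_support, Measure.map_apply hf (measurableSet_singleton _)] at hn
      exact absurd (by rw [show f ⁻¹' {⊤} = {x | f x = ⊤} from rfl, htop, mul_zero]) hn
    | coe k => exact ⟨k, rfl⟩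

lemma ENat.measure_ext_of_Ici {μ μ' : Measure ℕ∞} [IsFiniteMeasure μ] [IsFiniteMeasure μ']
    (h : ∀ j : ℕ, μ (Ici (j : ℕ∞)) = μ' (Ici (j : ℕ∞))) : μ = μ' := by
  refine Measure.ext_iff_singleton.2 fun n => ?_
  induction n using ENat.recTopCoe with
  | top =>
    have hlim (m : Measure ℕ∞) [IsFiniteMeasure m] :
        Tendsto (fun j : ℕ => m (Ici (j : ℕ∞))) atTop (nhds (m {⊤})) := by
      have htop : ({⊤} : Set ℕ∞) = ⋂ j : ℕ, Ici (j : ℕ∞) := by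
        ext n
        simp [ENat.eq_top_iff_forall_ge]
      rw [htop]
      exact tendsto_measure_iInter_atTop (fun _ => MeasurableSet.of_discrete.nullMeasurableSet)
        (fun i j hij => Ici_subset_Ici.2 (by exact_mod_cast hij)) ⟨0, measure_ne_top _ _⟩
    exact tendsto_nhds_unique (hlim μ) (by simpa only [h] using hlim μ')
  | coe j =>
    have hj : ({(j : ℕ∞)} : Set ℕ∞) = Ici (j : ℕ∞) \ Ici ((j + 1 : ℕ) : ℕ∞) := by
      ext n
      induction n using ENat.recTopCoe with
      | top => simp
      | coe n =>
        simp only [mem_singleton_iff, Nat.cast_inj, Set.mem_sdiff, mem_Ici, Nat.cast_le]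
        omega
    have hsub : Ici ((j + 1 : ℕ) : ℕ∞) ⊆ Ici (j : ℕ∞) := Ici_subset_Ici.2 (by simp)
    rw [hj, measure_sdiff hsub MeasurableSet.of_discrete.nullMeasurableSet (measure_ne_top _ _),
      measure_sdiff hsub MeasurableSet.of_discrete.nullMeasurableSet (measure_ne_top _ _), h, h]

lemma ENNReal.inv_le_of_one_le_mul {a b : ℝ≥0∞} (h : 1 ≤ a * b) : a⁻¹ ≤ b :=
  calc a⁻¹ ≤ a⁻¹ * (a * b) := le_mul_of_one_le_right' h
    _ ≤ b := by
      rw [← mul_assoc]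
      exact mul_le_of_le_one_left' (ENNReal.inv_mul_le_one a)

lemma ENNReal.two_mul_le_mul_sq_add_inv (θ : ℝ≥0∞) (k : ℕ) :
    2 * (k : ℝ≥0∞) ≤ θ * k ^ 2 + θ⁻¹ := by
  rcases eq_or_ne θ 0 with rfl | h0
  · simp
  rcases eq_or_ne θ ⊤ with rfl | htop
  · rcases k.eq_zero_or_pos with rfl | hk
    · simp
    · simp [ENNReal.top_mul, hk.ne']
  lift θ to NNReal using htop
  rw [← ENNReal.coe_inv (by exact_mod_cast h0)]
  have hθ : (θ : ℝ) ≠ 0 := by exact_mod_cast h0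
  have key : (2 * k : ℝ) ≤ θ * k ^ 2 + (θ : ℝ)⁻¹ := by
    have e : (θ : ℝ)⁻¹ * (θ * k - 1) ^ 2 = θ * k ^ 2 - 2 * k + (θ : ℝ)⁻¹ := by
      field_simp
      ring
    have : 0 ≤ (θ : ℝ)⁻¹ * ((θ : ℝ) * k - 1) ^ 2 := by positivity
    linarith
  exact_mod_cast key

lemma ENNReal.one_le_tsum_mul_tsum_mul_sq {q : ℕ → ℝ≥0∞}
    (h : ∑' k : ℕ, (k : ℝ≥0∞) * q k = 1) :
    1 ≤ (∑' k, q k) * ∑' k : ℕ, (k : ℝ≥0∞) * (k * q k) := by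
  set θ := ∑' k, q k
  have h2 : 1 + 1 ≤ θ * ∑' k : ℕ, (k : ℝ≥0∞) * (k * q k) + 1 := calc
    1 + 1 = ∑' k : ℕ, 2 * (k : ℝ≥0∞) * q k := by
      simp_rw [mul_assoc, ENNReal.tsum_mul_left, h, mul_one, one_add_one_eq_two]
    _ ≤ ∑' k : ℕ, (θ * k ^ 2 + θ⁻¹) * q k :=
      ENNReal.tsum_le_tsum fun k => mul_le_mul_left (two_mul_le_mul_sq_add_inv θ k) _
    _ = θ * ∑' k : ℕ, (k : ℝ≥0∞) * (k * q k) + θ⁻¹ * θ := by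
      simp_rw [add_mul, ENNReal.tsum_add, mul_assoc, ENNReal.tsum_mul_left, sq, mul_assoc]
      rfl
    _ ≤ θ * ∑' k : ℕ, (k : ℝ≥0∞) * (k * q k) + 1 := by
      gcongr
      exact ENNReal.inv_mul_le_one θ
  exact (ENNReal.add_le_add_iff_right one_ne_top).1 h2

lemma Set.encard_preimage_add_right (s : Set ℤ) (k : ℤ) :
    ((· + k) ⁻¹' s).encard = s.encard :=
  encard_preimage_of_injective_subset_range (add_left_injective k)
    fun t _ => ⟨t - k, sub_add_cancel t k⟩

namespace PalmCluster

open Function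

def shift (k : ℤ) (x : ℤ → Bool) : ℤ → Bool := fun t => x (t + k)

lemma measurable_shift (k : ℤ) : Measurable (shift k) :=
  measurable_pi_lambda _ fun _ => measurable_pi_apply _

/-! ### Cylinder events -/

def IsCylinder (E : Set (ℤ → Bool)) : Prop :=
  ∃ s : Finset ℤ, DependsOn (· ∈ E) (s : Set ℤ)

lemma IsCylinder.inter {E F : Set (ℤ → Bool)} (hE : IsCylinder E) (hF : IsCylinder F) :
    IsCylinder (E ∩ F) := by
  classical
  obtain ⟨s, hs⟩ := hE
  obtain ⟨s', hs'⟩ := hF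
  refine ⟨s ∪ s', fun x y hxy => ?_⟩
  simp only [Finset.coe_union, Set.mem_union] at hxy
  simp only [mem_inter_iff, hs fun t ht => hxy t (Or.inl ht), hs' fun t ht => hxy t (Or.inr ht)]

lemma isCylinder_setOf_apply_eq (t : ℤ) (b : Bool) : IsCylinder {x | x t = b} :=
  ⟨{t}, fun x y hxy => by simp [hxy t (by simp)]⟩

lemma IsCylinder.preimage_shift {E : Set (ℤ → Bool)} (hE : IsCylinder E) (k : ℤ) :
    IsCylinder (shift k ⁻¹' E) := by
  classical
  obtain ⟨s, hs⟩ := hE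
  exact ⟨s.image (· + k), fun x y hxy => hs fun t ht => hxy (t + k) (by simpa using ht)⟩

lemma preimage_restrict_image_of_dependsOn {E : Set (ℤ → Bool)} {s : Finset ℤ}
    (hs : DependsOn (· ∈ E) (s : Set ℤ)) : s.restrict ⁻¹' (s.restrict '' E) = E := by
  refine Subset.antisymm ?_ (subset_preimage_image _ _)
  rintro x ⟨y, hy, hyx⟩
  exact (hs fun t ht => congrFun hyx ⟨t, ht⟩).mp hy

lemma IsCylinder.measurableSet {E : Set (ℤ → Bool)} (hE : IsCylinder E) : MeasurableSet E := by
  obtain ⟨s, hs⟩ := hE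
  rw [← preimage_restrict_image_of_dependsOn hs]
  exact Finset.measurable_restrict s MeasurableSet.of_discrete

lemma isPiSystem_isCylinder : IsPiSystem {E : Set (ℤ → Bool) | IsCylinder E} :=
  fun _ hE _ hF _ => hE.inter hF

lemma generateFrom_isCylinder :
    MeasurableSpace.generateFrom {E : Set (ℤ → Bool) | IsCylinder E} = MeasurableSpace.pi := by
  refine le_antisymm (MeasurableSpace.generateFrom_le fun E hE => hE.measurableSet) ?_
  rw [← generateFrom_measurableCylinders]
  refine MeasurableSpace.generateFrom_mono fun E hE => ?_
  obtain ⟨s, S, -, rfl⟩ := (mem_measurableCylinders E).1 hE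
  refine ⟨s, fun x y hxy => ?_⟩
  simp [cylinder, show s.restrict x = s.restrict y from funext fun t => hxy t t.2]

def extendByFalse {s : Finset ℤ} (a : s → Bool) (t : ℤ) : Bool :=
  if h : t ∈ s then a ⟨t, h⟩ else false

lemma restrict_eq_iff_extendByFalse {s : Finset ℤ} {x : ℤ → Bool} {a : s → Bool} :
    s.restrict x = a ↔ ∀ t ∈ s, x t = extendByFalse a t := by
  simp +contextual [funext_iff, extendByFalse]

open Classical in
lemma measure_preimage_eq_sum_patterns {Y : Type*} [MeasurableSpace Y] (μ : Measure Y)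
    {g : Y → ℤ → Bool} (hg : Measurable g) {E : Set (ℤ → Bool)} {s : Finset ℤ}
    (hs : DependsOn (· ∈ E) (s : Set ℤ)) :
    μ (g ⁻¹' E) = ∑ a ∈ Finset.univ.filter (· ∈ s.restrict '' E),
      μ {y | ∀ t ∈ s, g y t = extendByFalse a t} := by
  have hf : Measurable (s.restrict ∘ g) := (Finset.measurable_restrict s).comp hg
  have := sum_measure_preimage_singleton (μ := μ) (Finset.univ.filter (· ∈ s.restrict '' E))
    fun a _ => hf (measurableSet_singleton a)
  simp only [Finset.coe_filter, Finset.mem_univ, true_and, ofPred_mem_eq] at this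
  rw [preimage_comp, preimage_restrict_image_of_dependsOn hs] at this
  rw [← this]
  simp only [preimage_comp]
  congr! 2 with a
  ext y
  simp [restrict_eq_iff_extendByFalse]

/-! ### Palm laws from Assumption 1 -/

-- The time-change formula of the tail process: `ν` is the Palm law of a stationary point process.
structure IsPalm (ν : Measure (ℤ → Bool)) : Prop where
  ae_apply_zero : ∀ᵐ x ∂ν, x 0 = true
  map_shift_restrict : ∀ k : ℤ,
    (ν.restrict {x | x k = true}).map (shift k) = ν.restrict {x | x (-k) = true}

section ConditionalLimit

variable {Ω : Type*} [MeasurableSpace Ω] {Ωn : ℕ → Type*} [∀ n, MeasurableSpace (Ωn n)]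

-- Assumption 1 of the paper.
structure IsConditionalLimit (P : Measure Ω) (I : ℤ → Ω → Bool)
    (Pn : ∀ n, Measure (Ωn n)) (In : ∀ n, ℤ → Ωn n → Bool) : Prop where
  isProbabilityMeasure : ∀ n, IsProbabilityMeasure (Pn n)
  measurable : ∀ n t, Measurable (In n t)
  pos : ∀ n, 0 < Pn n {ω | In n 0 ω = true}
  stationary : ∀ n (F : Finset ℤ) (ε : ℤ → Bool) (k : ℤ),
    Pn n {ω | ∀ t ∈ F, In n t ω = ε t} = Pn n {ω | ∀ t ∈ F, In n (t + k) ω = ε t}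
  tendsto : ∀ (F : Finset ℤ) (ε : ℤ → Bool), Tendsto (fun n =>
      Pn n ({ω | ∀ t ∈ F, In n t ω = ε t} ∩ {ω | In n 0 ω = true})
        / Pn n {ω | In n 0 ω = true}) atTop
    (nhds (P {ω | ∀ t ∈ F, I t ω = ε t}))

namespace IsConditionalLimit

variable {P : Measure Ω} {I : ℤ → Ω → Bool} {Pn : ∀ n, Measure (Ωn n)}
  {In : ∀ n, ℤ → Ωn n → Bool}

lemma stationary_of_isCylinder (h : IsConditionalLimit P I Pn In) {E : Set (ℤ → Bool)}
    (hE : IsCylinder E) (n : ℕ) (k : ℤ) :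
    Pn n (swap (In n) ⁻¹' E) = Pn n ((shift k ∘ swap (In n)) ⁻¹' E) := by
  obtain ⟨s, hs⟩ := hE
  have hX : Measurable (swap (In n)) := measurable_pi_lambda _ (h.measurable n)
  rw [measure_preimage_eq_sum_patterns _ hX hs,
    measure_preimage_eq_sum_patterns _ ((measurable_shift k).comp hX) hs]
  exact Finset.sum_congr rfl fun a _ => h.stationary n s (extendByFalse a) k

lemma tendsto_of_isCylinder (h : IsConditionalLimit P I Pn In) (hI : ∀ t, Measurable (I t))
    {E : Set (ℤ → Bool)} (hE : IsCylinder E) :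
    Tendsto (fun n => Pn n (swap (In n) ⁻¹' E ∩ {ω | In n 0 ω = true})
      / Pn n {ω | In n 0 ω = true}) atTop (nhds (P (swap I ⁻¹' E))) := by
  obtain ⟨s, hs⟩ := hE
  have hrestrict n (A : Set (Ωn n)) :
      Pn n (A ∩ {ω | In n 0 ω = true}) = (Pn n).restrict {ω | In n 0 ω = true} A :=
    (Measure.restrict_apply' (h.measurable n 0 (measurableSet_singleton true))).symm
  simp_rw [hrestrict,
    measure_preimage_eq_sum_patterns _ (measurable_pi_lambda _ (h.measurable _)) hs,
    measure_preimage_eq_sum_patterns _ (measurable_pi_lambda _ hI) hs, div_eq_mul_inv,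
    Finset.sum_mul, ← hrestrict, ← div_eq_mul_inv]
  exact tendsto_finsetSum _ fun a _ => h.tendsto s (extendByFalse a)

lemma measure_apply_zero_eq_one (h : IsConditionalLimit P I Pn In)
    (hI : ∀ t, Measurable (I t)) : P {ω | I 0 ω = true} = 1 := by
  have hlim := h.tendsto_of_isCylinder hI (isCylinder_setOf_apply_eq 0 true)
  have hone n : Pn n (swap (In n) ⁻¹' {x | x 0 = true} ∩ {ω | In n 0 ω = true})
      / Pn n {ω | In n 0 ω = true} = 1 := by
    have := h.isProbabilityMeasure n
    rw [show swap (In n) ⁻¹' {x | x 0 = true} = {ω | In n 0 ω = true} from rfl,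
      inter_self, ENNReal.div_self (h.pos n).ne' (measure_ne_top _ _)]
  simp_rw [hone] at hlim
  exact tendsto_nhds_unique hlim tendsto_const_nhds

lemma exchange_of_isCylinder (h : IsConditionalLimit P I Pn In) (hI : ∀ t, Measurable (I t))
    {E : Set (ℤ → Bool)} (hE : IsCylinder E) (k : ℤ) :
    P (swap I ⁻¹' (shift k ⁻¹' E ∩ {x | x k = true}))
      = P (swap I ⁻¹' (E ∩ {x | x (-k) = true})) := by
  refine tendsto_nhds_unique (h.tendsto_of_isCylinder hI
    ((hE.preimage_shift k).inter (isCylinder_setOf_apply_eq k true))) ?_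
  refine (h.tendsto_of_isCylinder hI
    (hE.inter (isCylinder_setOf_apply_eq (-k) true))).congr fun n => ?_
  have hE' := (hE.inter (isCylinder_setOf_apply_eq (-k) true)).inter
    (isCylinder_setOf_apply_eq 0 true)
  congr 1
  convert h.stationary_of_isCylinder hE' n k using 2
  · rfl
  · ext ω
    simp only [shift, swap, mem_inter_iff, mem_preimage, mem_ofPred_eq, comp_apply,
      neg_add_cancel, zero_add]
    tauto

lemma isPalm_map [IsProbabilityMeasure P] (h : IsConditionalLimit P I Pn In)
    (hI : ∀ t, Measurable (I t)) : IsPalm (P.map (swap I)) := by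
  have hX : Measurable (swap I) := measurable_pi_lambda _ hI
  have hmeas (t : ℤ) := (isCylinder_setOf_apply_eq t true).measurableSet
  have hcyl {E : Set (ℤ → Bool)} (hE : IsCylinder E) (k : ℤ) :
      ((P.map (swap I)).restrict {x | x k = true}).map (shift k) E
        = (P.map (swap I)).restrict {x | x (-k) = true} E := by
    rw [Measure.map_apply (measurable_shift k) hE.measurableSet,
      Measure.restrict_apply' (hmeas k), Measure.restrict_apply' (hmeas (-k)),
      Measure.map_apply hX ((hE.preimage_shift k).measurableSet.inter (hmeas k)),
      Measure.map_apply hX (hE.measurableSet.inter (hmeas (-k)))]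
    exact h.exchange_of_isCylinder hI hE k
  refine ⟨?_, fun k => ?_⟩
  · refine (ae_map_iff hX.aemeasurable (hmeas 0)).2
      ((ae_iff_measure_eq (hX (hmeas 0)).nullMeasurableSet).2 ?_)
    rw [measure_univ]
    exact h.measure_apply_zero_eq_one hI
  · exact (ext_of_generate_finite _ generateFrom_isCylinder.symm isPiSystem_isCylinder
      (fun E hE => (hcyl hE k).symm) (hcyl ⟨∅, fun _ _ _ => rfl⟩ k).symm).symm

end IsConditionalLimit

end ConditionalLimit

/-! ### Moving the origin to the next point -/

@[fun_prop]
lemma measurable_SiFn : Measurable (SiFn (eval : ℤ → (ℤ → Bool) → Bool)) :=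
  measurable_encard.comp (measurable_set_iff.2 fun _ => by fun_prop)

@[fun_prop]
lemma measurable_SplusFn : Measurable (SplusFn (eval : ℤ → (ℤ → Bool) → Bool)) :=
  measurable_encard.comp (measurable_set_iff.2 fun _ => by fun_prop)

@[fun_prop]
lemma measurable_SminusFn : Measurable (SminusFn (eval : ℤ → (ℤ → Bool) → Bool)) :=
  measurable_encard.comp (measurable_set_iff.2 fun _ => by fun_prop)

lemma SiFn_eq_add_of_apply_zero {x : ℤ → Bool} (hx : x 0 = true) :
    SiFn eval x = SminusFn eval x + 1 + SplusFn eval x := by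
  have hsplit : {t | x t = true}
      = ({t | t < 0 ∧ x t = true} ∪ {0}) ∪ {t | 0 < t ∧ x t = true} := by
    ext t
    rcases lt_trichotomy t 0 with h | rfl | h
    · simp [h, h.ne]
    · simp [hx]
    · simp [h, h.not_gt, h.ne']
  change {t | x t = true}.encard = _
  rw [hsplit, encard_union_eq, encard_union_eq, encard_singleton]
  · rfl
  · exact disjoint_singleton_right.2 fun h => lt_irrefl _ h.1
  · exact disjoint_left.2 fun t h1 h2 => by
      rcases h1 with h1 | rfl
      · exact lt_asymm h1.1 h2.1
      · exact lt_irrefl _ h2.1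

lemma SiFn_shift (k : ℤ) (x : ℤ → Bool) : SiFn eval (shift k x) = SiFn eval x :=
  encard_preimage_add_right {t | x t = true} k

-- `x ∈ nextPointAt m`: the first point of `x` after `0` is at `m`;
-- `x ∈ prevPointAt m`: the last point of `x` before `0` is at `-m`.
def nextPointAt (m : ℤ) : Set (ℤ → Bool) :=
  {x | 0 < m ∧ x m = true ∧ ∀ t, 0 < t → t < m → x t = false}

def prevPointAt (m : ℤ) : Set (ℤ → Bool) :=
  {x | 0 < m ∧ x (-m) = true ∧ ∀ t, -m < t → t < 0 → x t = false}

section ShiftToNextPoint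

variable {m : ℤ} {x : ℤ → Bool}

lemma SminusFn_shift_of_mem_nextPointAt (hx0 : x 0 = true) (hx : x ∈ nextPointAt m) :
    SminusFn eval (shift m x) = SminusFn eval x + 1 := by
  obtain ⟨hm, -, hgap⟩ := hx
  have hsplit : {t | t < 0 ∧ x (t + m) = true}
      = (· + m) ⁻¹' ({t | t < 0 ∧ x t = true} ∪ {0}) := by
    ext t
    simp only [mem_ofPred_eq, mem_preimage, mem_union, mem_singleton_iff]
    constructor
    · rintro ⟨ht, hxt⟩
      rcases lt_trichotomy (t + m) 0 with h | h | h
      · exact Or.inl ⟨h, hxt⟩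
      · exact Or.inr h
      · simp [hgap (t + m) h (by omega)] at hxt
    · rintro (⟨h, hxt⟩ | h)
      · exact ⟨by omega, hxt⟩
      · exact ⟨by omega, by rw [h]; exact hx0⟩
  change {t | t < 0 ∧ x (t + m) = true}.encard = _
  rw [hsplit, encard_preimage_add_right, encard_union_eq
    (disjoint_singleton_right.2 fun h => lt_irrefl _ h.1), encard_singleton]
  rfl

lemma SplusFn_shift_add_one_of_mem_nextPointAt (hx : x ∈ nextPointAt m) :
    SplusFn eval (shift m x) + 1 = SplusFn eval x := by
  obtain ⟨hm, hxm, hgap⟩ := hx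
  have hsplit : {t | 0 < t ∧ x t = true}
      = (· + m) '' {t | 0 < t ∧ x (t + m) = true} ∪ {m} := by
    ext u
    simp only [mem_ofPred_eq, mem_union, mem_image, mem_singleton_iff]
    constructor
    · rintro ⟨hu, hxu⟩
      rcases lt_trichotomy u m with h | rfl | h
      · simp [hgap u hu h] at hxu
      · exact Or.inr rfl
      · exact Or.inl ⟨u - m, ⟨by omega, by simpa using hxu⟩, by simp⟩
    · rintro (⟨t, ⟨ht, hxt⟩, rfl⟩ | rfl)
      · exact ⟨by omega, hxt⟩
      · exact ⟨hm, hxm⟩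
  change _ = {t | 0 < t ∧ x t = true}.encard
  rw [hsplit, encard_union_eq, (add_left_injective m).encard_image, encard_singleton]
  · rfl
  · exact disjoint_singleton_right.2 fun ⟨t, ht, hmt⟩ => by
      have : t + m = m := hmt
      exact absurd ht.1 (by omega)

end ShiftToNextPoint

lemma measurableSet_nextPointAt (m : ℤ) : MeasurableSet (nextPointAt m) :=
  measurableSet_setOfPred.2 (by fun_prop)

lemma measurableSet_prevPointAt (m : ℤ) : MeasurableSet (prevPointAt m) :=
  measurableSet_setOfPred.2 (by fun_prop)

lemma pairwise_disjoint_nextPointAt : Pairwise (Disjoint on nextPointAt) := by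
  have key {m m' : ℤ} (h : m < m') : Disjoint (nextPointAt m) (nextPointAt m') :=
    disjoint_left.2 fun x hx hx' => by simpa [hx.2.1] using hx'.2.2 m hx.1 h
  exact fun m m' hne => hne.lt_or_gt.elim key fun h => (key h).symm

lemma pairwise_disjoint_prevPointAt : Pairwise (Disjoint on prevPointAt) := by
  have key {m m' : ℤ} (h : m < m') : Disjoint (prevPointAt m) (prevPointAt m') :=
    disjoint_left.2 fun x hx hx' => by
      have := hx.1
      simpa [hx.2.1] using hx'.2.2 (-m) (by omega) (by omega)
  exact fun m m' hne => hne.lt_or_gt.elim key fun h => (key h).symm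

lemma iUnion_nextPointAt : ⋃ m, nextPointAt m = {x | SplusFn eval x ≠ 0} := by
  ext x
  simp only [mem_iUnion, mem_ofPred_eq, SplusFn, eval, ne_eq, encard_eq_zero,
    ← nonempty_iff_ne_empty]
  constructor
  · rintro ⟨m, hm, hxm, -⟩
    exact ⟨m, hm, hxm⟩
  · rintro hne
    obtain ⟨m, ⟨hm, hxm⟩, hmin⟩ := Int.exists_least_of_bdd ⟨0, fun t ht => ht.1.le⟩ hne
    exact ⟨m, hm, hxm, fun t ht htm =>
      Bool.eq_false_iff.2 fun hxt => (hmin t ⟨ht, hxt⟩).not_gt htm⟩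

lemma iUnion_prevPointAt : ⋃ m, prevPointAt m = {x | SminusFn eval x ≠ 0} := by
  ext x
  simp only [mem_iUnion, mem_ofPred_eq, SminusFn, eval, ne_eq, encard_eq_zero,
    ← nonempty_iff_ne_empty]
  constructor
  · rintro ⟨m, hm, hxm, -⟩
    exact ⟨-m, by omega, hxm⟩
  · rintro hne
    obtain ⟨m, ⟨hm, hxm⟩, hmax⟩ :=
      Int.exists_greatest_of_bdd ⟨0, fun t ht => ht.1.le⟩ hne
    exact ⟨-m, by omega, by simpa using hxm,
      fun t ht htm => Bool.eq_false_iff.2 fun hxt => (hmax t ⟨htm, hxt⟩).not_gt (by omega)⟩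

variable {ν : Measure (ℤ → Bool)}

lemma IsPalm.measure_inter_prevPointAt (hν : IsPalm ν) {E : Set (ℤ → Bool)}
    (hE : MeasurableSet E) (m : ℤ) :
    ν (E ∩ prevPointAt m) = ν (shift m ⁻¹' E ∩ nextPointAt m) := by
  set G : Set (ℤ → Bool) := {x | 0 < m ∧ ∀ t, -m < t → t < 0 → x t = false}
  have hG : MeasurableSet G := measurableSet_setOfPred.2 (by fun_prop)
  have hcoord (t : ℤ) := (isCylinder_setOf_apply_eq t true).measurableSet
  have key := congrArg (· (E ∩ G)) (hν.map_shift_restrict m)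
  rw [Measure.map_apply (measurable_shift m) (hE.inter hG), Measure.restrict_apply' (hcoord m),
    Measure.restrict_apply' (hcoord (-m))] at key
  have hprev : E ∩ prevPointAt m = E ∩ G ∩ {x | x (-m) = true} := by
    ext x
    simp only [prevPointAt, G, mem_inter_iff, mem_ofPred_eq]
    tauto
  have hnext :
      shift m ⁻¹' E ∩ nextPointAt m = shift m ⁻¹' (E ∩ G) ∩ {x | x m = true} := by
    ext x
    simp only [nextPointAt, G, shift, mem_inter_iff, mem_preimage, mem_ofPred_eq]
    constructor
    · rintro ⟨hxE, hm, hxm, hgap⟩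
      exact ⟨⟨hxE, hm, fun t h1 h2 => hgap (t + m) (by omega) (by omega)⟩, hxm⟩
    · rintro ⟨⟨hxE, hm, hgap⟩, hxm⟩
      exact ⟨hxE, hm, hxm, fun u h1 h2 => by simpa using hgap (u - m) (by omega) (by omega)⟩
  rw [hprev, hnext, key]

-- The exchange formula summed over the position of the next point.
lemma IsPalm.measure_eq_of_shift_nextPointAt (hν : IsPalm ν) {E F : Set (ℤ → Bool)}
    (hE : MeasurableSet E) (hF : MeasurableSet F)
    (hE_minus : ∀ x, x 0 = true → x ∈ E → SminusFn eval x ≠ 0)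
    (hF_plus : ∀ x, x 0 = true → x ∈ F → SplusFn eval x ≠ 0)
    (hEF : ∀ m x, x 0 = true → x ∈ nextPointAt m → (shift m x ∈ E ↔ x ∈ F)) :
    ν E = ν F := by
  rw [measure_eq_tsum_inter ν pairwise_disjoint_prevPointAt measurableSet_prevPointAt hE
      (hν.ae_apply_zero.mono fun x hx0 hxE => iUnion_prevPointAt ▸ hE_minus x hx0 hxE),
    measure_eq_tsum_inter ν pairwise_disjoint_nextPointAt measurableSet_nextPointAt hF
      (hν.ae_apply_zero.mono fun x hx0 hxF => iUnion_nextPointAt ▸ hF_plus x hx0 hxF)]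
  refine tsum_congr fun m => ?_
  rw [hν.measure_inter_prevPointAt hE m]
  refine measure_congr (eventuallyEq_set.2 ?_)
  filter_upwards [hν.ae_apply_zero] with x hx0
  exact and_congr_left fun hxm => hEF m x hx0 hxm

lemma IsPalm.measure_le_SminusFn_le_SplusFn (hν : IsPalm ν) (a b : ℕ) :
    ν {x | (a : ℕ∞) ≤ SminusFn eval x ∧ (b : ℕ∞) ≤ SplusFn eval x}
      = ν {x | ((a + b : ℕ) : ℕ∞) ≤ SplusFn eval x} := by
  induction a generalizing b with
  | zero => simp
  | succ a ih =>
    rw [← show a + (b + 1) = a + 1 + b by ring, ← ih (b + 1)]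
    refine hν.measure_eq_of_shift_nextPointAt (measurableSet_setOfPred.2 (by fun_prop))
      (measurableSet_setOfPred.2 (by fun_prop)) (fun x _ hx => ?_) (fun x _ hx => ?_)
      (fun m x hx0 hxm => ?_)
    · exact (lt_of_lt_of_le (by exact_mod_cast a.succ_pos) hx.1).ne'
    · exact (lt_of_lt_of_le (by exact_mod_cast b.succ_pos) hx.2).ne'
    · simp only [mem_ofPred_eq, SminusFn_shift_of_mem_nextPointAt hx0 hxm,
        ← SplusFn_shift_add_one_of_mem_nextPointAt hxm, Nat.cast_add, Nat.cast_one,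
        ENat.add_le_add_iff_right ENat.one_ne_top]

lemma IsPalm.measure_le_SminusFn (hν : IsPalm ν) (j : ℕ) :
    ν {x | (j : ℕ∞) ≤ SminusFn eval x} = ν {x | (j : ℕ∞) ≤ SplusFn eval x} := by
  simpa using hν.measure_le_SminusFn_le_SplusFn j 0

lemma IsPalm.map_SminusFn [IsFiniteMeasure ν] (hν : IsPalm ν) :
    ν.map (SminusFn eval) = ν.map (SplusFn eval) :=
  ENat.measure_ext_of_Ici fun j => by
    rw [Measure.map_apply measurable_SminusFn MeasurableSet.of_discrete,
      Measure.map_apply measurable_SplusFn MeasurableSet.of_discrete]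
    exact hν.measure_le_SminusFn j

lemma IsPalm.measure_SminusFn_eq [IsFiniteMeasure ν] (hν : IsPalm ν) (n : ℕ∞) :
    ν {x | SminusFn eval x = n} = ν {x | SplusFn eval x = n} := by
  have := congrArg (· {n}) hν.map_SminusFn
  rw [Measure.map_apply measurable_SminusFn MeasurableSet.of_discrete,
    Measure.map_apply measurable_SplusFn MeasurableSet.of_discrete] at this
  exact this

lemma IsPalm.lintegral_SminusFn [IsFiniteMeasure ν] (hν : IsPalm ν) :
    ∫⁻ x, (SminusFn eval x : ℝ≥0∞) ∂ν = ∫⁻ x, (SplusFn eval x : ℝ≥0∞) ∂ν := by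
  rw [← lintegral_map (f := fun n : ℕ∞ => (n : ℝ≥0∞)) Measurable.of_discrete
      measurable_SminusFn,
    hν.map_SminusFn, lintegral_map Measurable.of_discrete measurable_SplusFn]

/-! ### Cluster-size distribution under a Palm law -/

lemma IsPalm.measure_SiFn_inter_SminusFn_succ (hν : IsPalm ν) {k j : ℕ} (hjk : j + 1 < k) :
    ν ({x | SiFn eval x = k} ∩ {x | SminusFn eval x = (j + 1 : ℕ)})
      = ν ({x | SiFn eval x = k} ∩ {x | SminusFn eval x = j}) := by
  refine hν.measure_eq_of_shift_nextPointAt (by measurability) (by measurability)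
    (fun x _ hx => ?_) (fun x hx0 hx hplus => ?_) (fun m x hx0 hxm => ?_)
  · obtain ⟨-, hj⟩ : SiFn eval x = k ∧ SminusFn eval x = (j + 1 : ℕ) := hx
    simp [hj]
  · obtain ⟨hk, hj⟩ : SiFn eval x = k ∧ SminusFn eval x = j := hx
    rw [SiFn_eq_add_of_apply_zero hx0, hj, hplus, add_zero] at hk
    exact absurd (by exact_mod_cast hk : j + 1 = k) (by omega)
  · simp only [mem_inter_iff, mem_ofPred_eq, SiFn_shift, SminusFn_shift_of_mem_nextPointAt hx0 hxm,
      Nat.cast_add, Nat.cast_one]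
    exact and_congr_right fun _ => (ENat.add_left_injective_of_ne_top ENat.one_ne_top).eq_iff

lemma IsPalm.measure_SiFn_inter_SminusFn (hν : IsPalm ν) {k j : ℕ} (hjk : j < k) :
    ν ({x | SiFn eval x = k} ∩ {x | SminusFn eval x = j})
      = ν ({x | SiFn eval x = k} ∩ {x | SminusFn eval x = 0}) := by
  induction j with
  | zero => simp
  | succ j ih => rw [hν.measure_SiFn_inter_SminusFn_succ hjk, ih (by omega)]

lemma IsPalm.measure_SiFn (hν : IsPalm ν) (k : ℕ) :
    ν {x | SiFn eval x = k} = k * ν ({x | SiFn eval x = k} ∩ {x | SminusFn eval x = 0}) := by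
  have hcover : {x | SiFn eval x = k}
      =ᵐ[ν] ⋃ j ∈ Finset.range k, {x | SiFn eval x = k} ∩ {x | SminusFn eval x = j} := by
    refine eventuallyEq_set.2 ?_
    filter_upwards [hν.ae_apply_zero] with x hx0
    simp only [mem_iUnion, mem_inter_iff, mem_ofPred_eq, Finset.mem_range, exists_prop]
    refine ⟨fun hk => ?_, fun ⟨j, _, hk, _⟩ => hk⟩
    have hsum := hk
    rw [SiFn_eq_add_of_apply_zero hx0] at hsum
    have hne : SminusFn eval x ≠ ⊤ := fun h => by simp [h] at hsum
    lift SminusFn eval x to ℕ using hne with j hj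
    refine ⟨j, ?_, hk, rfl⟩
    have : ((j + 1 : ℕ) : ℕ∞) ≤ k := hsum ▸ (by push_cast; exact le_self_add)
    exact_mod_cast this
  rw [measure_congr hcover, measure_biUnion_finset
    (f := fun j : ℕ => {x | SiFn eval x = k} ∩ {x | SminusFn eval x = (j : ℕ∞)})
    (fun i _ j _ hij => disjoint_left.2 fun x hi hj => hij (by exact_mod_cast hi.2.symm.trans hj.2))
    (fun j _ => by measurability),
    Finset.sum_congr rfl fun j hj => hν.measure_SiFn_inter_SminusFn (Finset.mem_range.1 hj),
    Finset.sum_const, Finset.card_range, nsmul_eq_mul]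

variable [IsProbabilityMeasure ν]

lemma IsPalm.measure_SiFn_eq_top (hν : IsPalm ν) (hfin : ν {x | SplusFn eval x ≠ ⊤} = 1) :
    ν {x | SiFn eval x = ⊤} = 0 := by
  have hplus : ν {x | SplusFn eval x = ⊤} = 0 := by
    rw [← prob_compl_eq_zero_iff (by measurability)] at hfin
    simpa [compl_ofPred] using hfin
  refine measure_mono_null_ae ?_
    (measure_union_null ((hν.measure_SminusFn_eq ⊤).trans hplus) hplus)
  filter_upwards [hν.ae_apply_zero] with x hx0 (hx : SiFn eval x = ⊤)
  rw [SiFn_eq_add_of_apply_zero hx0] at hx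
  change SminusFn eval x = ⊤ ∨ SplusFn eval x = ⊤
  simpa using hx

lemma IsPalm.tsum_measure_SiFn_inter (hν : IsPalm ν) (hfin : ν {x | SplusFn eval x ≠ ⊤} = 1)
    {A : Set (ℤ → Bool)} (hA : MeasurableSet A) :
    ∑' k : ℕ, ν ({x | SiFn eval x = k} ∩ A) = ν A := by
  rw [tsum_measure_setOf_eq_natCast_inter ν measurable_SiFn hA, inter_comm]
  refine measure_inter_conull ?_
  simpa [compl_ofPred] using hν.measure_SiFn_eq_top hfin

lemma IsPalm.tsum_natCast_mul_measure_SiFn_inter (hν : IsPalm ν)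
    (hfin : ν {x | SplusFn eval x ≠ ⊤} = 1) :
    ∑' k : ℕ, (k : ℝ≥0∞) * ν ({x | SiFn eval x = k} ∩ {x | SminusFn eval x = 0})
      = 1 := by
  simp_rw [← hν.measure_SiFn]
  simpa using hν.tsum_measure_SiFn_inter hfin MeasurableSet.univ

lemma IsPalm.inv_measure_SplusFn_eq_zero (hν : IsPalm ν)
    (hfin : ν {x | SplusFn eval x ≠ ⊤} = 1) :
    (ν {x | SplusFn eval x = 0})⁻¹ = ∑' k : ℕ, (k : ℝ≥0∞) *
      (ν ({x | SiFn eval x = k} ∩ {x | SminusFn eval x = 0})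
        / ν {x | SminusFn eval x = 0}) := by
  simp_rw [div_eq_mul_inv, ← mul_assoc]
  rw [ENNReal.tsum_mul_right, hν.tsum_natCast_mul_measure_SiFn_inter hfin, one_mul,
    hν.measure_SminusFn_eq 0]

lemma IsPalm.tsum_le_lintegral_SiFn (hν : IsPalm ν) (hfin : ν {x | SplusFn eval x ≠ ⊤} = 1) :
    ∑' k : ℕ, (k : ℝ≥0∞) *
      (ν ({x | SiFn eval x = k} ∩ {x | SminusFn eval x = 0})
        / ν {x | SminusFn eval x = 0}) ≤ ∫⁻ x, (SiFn eval x : ℝ≥0∞) ∂ν := by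
  rw [← hν.inv_measure_SplusFn_eq_zero hfin, ← hν.measure_SminusFn_eq 0,
    lintegral_toENNReal_eq_tsum ν measurable_SiFn (hν.measure_SiFn_eq_top hfin)]
  simp_rw [hν.measure_SiFn]
  refine ENNReal.inv_le_of_one_le_mul ?_
  rw [← hν.tsum_measure_SiFn_inter hfin (by measurability)]
  exact ENNReal.one_le_tsum_mul_tsum_mul_sq (hν.tsum_natCast_mul_measure_SiFn_inter hfin)

lemma IsPalm.lintegral_SiFn (hν : IsPalm ν) :
    ∫⁻ x, (SiFn eval x : ℝ≥0∞) ∂ν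
      = 1 + 2 * ∫⁻ x, (SplusFn eval x : ℝ≥0∞) ∂ν := by
  have hsplit : (fun x => (SiFn eval x : ℝ≥0∞))
      =ᵐ[ν] fun x => (SminusFn eval x : ℝ≥0∞) + 1 + SplusFn eval x := by
    filter_upwards [hν.ae_apply_zero] with x hx0
    simp [SiFn_eq_add_of_apply_zero hx0]
  rw [lintegral_congr_ae hsplit, lintegral_add_right _ (by fun_prop),
    lintegral_add_right _ measurable_const, lintegral_const, measure_univ, mul_one,
    hν.lintegral_SminusFn]
  ring

end PalmCluster

theorem theta_inv_eq_typical_mean_le_inspected_mean_general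
    {Ω : Type*} [MeasurableSpace Ω] (P : Measure Ω) [IsProbabilityMeasure P]
    (I : ℤ → Ω → Bool) (hI : ∀ t, Measurable (I t))
    {Ωn : ℕ → Type*} [∀ n, MeasurableSpace (Ωn n)]
    (Pn : ∀ n, Measure (Ωn n)) (hPn : ∀ n, IsProbabilityMeasure (Pn n))
    (In : ∀ n, ℤ → Ωn n → Bool) (hIn : ∀ n t, Measurable (In n t))
    -- `P(I₀ⁿ = 1) > 0` for all `n`
    (hpos : ∀ n, 0 < Pn n {ω | In n 0 ω = true})
    -- stationarity of each `(Iₜⁿ)ₜ`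
    (hstat : ∀ n (F : Finset ℤ) (ε : ℤ → Bool) (k : ℤ),
      Pn n {ω | ∀ t ∈ F, In n t ω = ε t} = Pn n {ω | ∀ t ∈ F, In n (t + k) ω = ε t})
    -- convergence of the conditional finite-dimensional distributions
    (hconv : ∀ (F : Finset ℤ) (ε : ℤ → Bool),
      Tendsto (fun n =>
          Pn n ({ω | ∀ t ∈ F, In n t ω = ε t} ∩ {ω | In n 0 ω = true})
            / Pn n {ω | In n 0 ω = true}) atTop
        (nhds (P {ω | ∀ t ∈ F, I t ω = ε t})))

    (hfin : P {ω | SplusFn I ω ≠ ⊤} = 1) :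
    (P {ω | SplusFn I ω = 0})⁻¹ = (∑' k : ℕ, (k : ℝ≥0∞) * (P ({ω | SiFn I ω = ((k : ℕ) : ℕ∞)} ∩ {ω | SminusFn I ω = 0}) / P {ω | SminusFn I ω = 0}))
    ∧ (∑' k : ℕ, (k : ℝ≥0∞) * (P ({ω | SiFn I ω = ((k : ℕ) : ℕ∞)} ∩ {ω | SminusFn I ω = 0}) / P {ω | SminusFn I ω = 0})) ≤ ∫⁻ ω, (SiFn I ω : ℝ≥0∞) ∂P
    ∧ (∫⁻ ω, (SiFn I ω : ℝ≥0∞) ∂P) = 1 + 2 * (∫⁻ ω, (SplusFn I ω : ℝ≥0∞) ∂P) := by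
  have hX : Measurable (Function.swap I) := measurable_pi_lambda _ hI
  have := Measure.isProbabilityMeasure_map (μ := P) hX.aemeasurable
  have hν := PalmCluster.IsConditionalLimit.isPalm_map ⟨hPn, hIn, hpos, hstat, hconv⟩ hI
  have hmap {A : Set (ℤ → Bool)} (hA : MeasurableSet A) :
      P.map (Function.swap I) A = P (Function.swap I ⁻¹' A) :=
    Measure.map_apply hX hA
  have hint {f : (ℤ → Bool) → ℕ∞} (hf : Measurable f) :
      ∫⁻ x, (f x : ℝ≥0∞) ∂P.map (Function.swap I)
        = ∫⁻ ω, (f (Function.swap I ω) : ℝ≥0∞) ∂P :=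
    lintegral_map (Measurable.of_discrete.comp hf) hX
  have hfin' : P.map (Function.swap I) {x | SplusFn Function.eval x ≠ ⊤} = 1 :=
    (hmap (by measurability)).trans hfin
  have h1 := hν.inv_measure_SplusFn_eq_zero hfin'
  have h2 := hν.tsum_le_lintegral_SiFn hfin'
  have h3 := hν.lintegral_SiFn
  simp (disch := measurability) only [hmap, hint PalmCluster.measurable_SiFn,
    hint PalmCluster.measurable_SplusFn] at h1 h2 h3
  exact ⟨h1, h2, h3⟩

/-- Theorem 4.2(b), Equation (4.9): under Assumption 1, if `θ = P(S₊ⁱ = 0) > 0`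
and `P(S₊ⁱ < ∞) = 1`, then `θ⁻¹ = E(Sᵗ) ≤ E(Sⁱ) = 1 + 2·E(S₊ⁱ)`. -/
theorem theta_inv_eq_typical_mean_le_inspected_mean
    {Ω : Type*} [MeasurableSpace Ω] (P : Measure Ω) [IsProbabilityMeasure P]
    (I : ℤ → Ω → Bool) (hI : ∀ t, Measurable (I t))
    {Ωn : ℕ → Type*} [∀ n, MeasurableSpace (Ωn n)]
    (Pn : ∀ n, Measure (Ωn n)) (hPn : ∀ n, IsProbabilityMeasure (Pn n))
    (In : ∀ n, ℤ → Ωn n → Bool) (hIn : ∀ n t, Measurable (In n t))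
    -- `P(I₀ⁿ = 1) > 0` for all `n`
    (hpos : ∀ n, 0 < Pn n {ω | In n 0 ω = true})
    -- stationarity of each `(Iₜⁿ)ₜ`
    (hstat : ∀ n (F : Finset ℤ) (ε : ℤ → Bool) (k : ℤ),
      Pn n {ω | ∀ t ∈ F, In n t ω = ε t} = Pn n {ω | ∀ t ∈ F, In n (t + k) ω = ε t})
    -- convergence of the conditional finite-dimensional distributions
    (hconv : ∀ (F : Finset ℤ) (ε : ℤ → Bool),
      Tendsto (fun n =>
          Pn n ({ω | ∀ t ∈ F, In n t ω = ε t} ∩ {ω | In n 0 ω = true})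
            / Pn n {ω | In n 0 ω = true}) atTop
        (nhds (P {ω | ∀ t ∈ F, I t ω = ε t})))

    (hθ : 0 < P {ω | SplusFn I ω = 0}) (hfin : P {ω | SplusFn I ω ≠ ⊤} = 1) :
    (P {ω | SplusFn I ω = 0})⁻¹ = (∑' k : ℕ, (k : ℝ≥0∞) * (P ({ω | SiFn I ω = ((k : ℕ) : ℕ∞)} ∩ {ω | SminusFn I ω = 0}) / P {ω | SminusFn I ω = 0}))
    ∧ (∑' k : ℕ, (k : ℝ≥0∞) * (P ({ω | SiFn I ω = ((k : ℕ) : ℕ∞)} ∩ {ω | SminusFn I ω = 0}) / P {ω | SminusFn I ω = 0})) ≤ ∫⁻ ω, (SiFn I ω : ℝ≥0∞) ∂P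
    ∧ (∫⁻ ω, (SiFn I ω : ℝ≥0∞) ∂P) = 1 + 2 * (∫⁻ ω, (SplusFn I ω : ℝ≥0∞) ∂P) :=
  theta_inv_eq_typical_mean_le_inspected_mean_general P I hI Pn hPn In hIn hpos hstat hconv hfin
end
end

section
/- Under Assumption 1, if θ := P(S₊ⁱ = 0) > 0, then E(Sᵗ) ≤ E(Sⁱ), where E(Sᵗ) := Σ_{k=1}^∞ k·π_k ∈ (0, ∞] is the expected typical cluster size and E(Sⁱ) ∈ [1, ∞] is the expected inspected cluster size; this holds without assuming P(S₊ⁱ < ∞) = 1 (if P(S₊ⁱ < ∞) < 1 then E(Sⁱ) = ∞). -/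
open MeasureTheory Filter Set ENNReal

noncomputable section

/-!
Conditioning the stationary processes `Iⁿ` on `I₀ⁿ = 1` and passing to the limit gives
`P(I₀ = 1) = 1` and the time-change formula: the law of the cylinder events seen from a time `s`
with `I_s = 1` is the law seen from `0`. Hence the probability that the cluster is exactly a finite
set `T ∋ 0` is unchanged when `T` is translated by any of its points. A set `N` with minimum `0`
and `k` points has exactly `k` such translates containing `0`, so
`P(Sⁱ = k) = k a_k` with `a_k = P(Sⁱ = k, S₋ⁱ = 0)`.

If `E Sⁱ < ∞`, then `Sⁱ < ∞` a.s., so `Σ k a_k = Σ P(Sⁱ = k) = 1`, while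
`E Sⁱ ≥ Σ k P(Sⁱ = k) = Σ k² a_k`. By Cauchy–Schwarz,
`1 = (Σ k a_k)² ≤ (Σ a_k) (Σ k² a_k) ≤ P(S₋ⁱ = 0) E Sⁱ`, which is `E Sᵗ = 1 / P(S₋ⁱ = 0) ≤ E Sⁱ`.
-/

theorem ENNReal.two_mul_le_add_sq (a b : ℝ≥0∞) : 2 * a * b ≤ a ^ 2 + b ^ 2 := by
  rcases eq_or_ne a ⊤ with rfl | ha
  · simp
  rcases eq_or_ne b ⊤ with rfl | hb
  · simp
  lift a to NNReal using ha
  lift b to NNReal using hb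
  exact_mod_cast _root_.two_mul_le_add_sq a b

theorem ENNReal.sq_tsum_mul_le {ι : Type*} (x w : ι → ℝ≥0∞) :
    (∑' i, x i * w i) ^ 2 ≤ (∑' i, w i) * ∑' i, x i ^ 2 * w i := by
  have expand : ∀ u v : ι → ℝ≥0∞, (∑' i, u i) * (∑' j, v j) = ∑' i, ∑' j, u i * v j := by
    intro u v
    simp_rw [ENNReal.tsum_mul_left, ENNReal.tsum_mul_right]
  rw [← ENNReal.mul_le_mul_iff_right two_ne_zero ofNat_ne_top]
  calc 2 * (∑' i, x i * w i) ^ 2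
      = ∑' i, ∑' j, 2 * x i * x j * (w i * w j) := by
        rw [sq, expand, ← ENNReal.tsum_mul_left]
        exact tsum_congr fun i => by rw [← ENNReal.tsum_mul_left]; exact tsum_congr fun j => by ring
    _ ≤ ∑' i, ∑' j, (x i ^ 2 + x j ^ 2) * (w i * w j) := by
        gcongr with i j
        exact ENNReal.two_mul_le_add_sq _ _
    _ = 2 * ((∑' i, w i) * ∑' i, x i ^ 2 * w i) := by
        simp_rw [add_mul, ENNReal.tsum_add]
        rw [ENNReal.tsum_comm (f := fun i j => x i ^ 2 * (w i * w j)), two_mul, expand]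
        congr 1 <;> exact tsum_congr fun i => tsum_congr fun j => by ring

section NatValued

variable {α : Type*} [MeasurableSpace α] {μ : Measure α} {f : α → ℕ∞}

theorem tsum_mul_measure_eq_coe_le_lintegral (hf : Measurable f) :
    ∑' k : ℕ, (k : ℝ≥0∞) * μ {a | f a = k} ≤ ∫⁻ a, (f a : ℝ≥0∞) ∂μ := by
  rw [← lintegral_map (f := fun n : ℕ∞ => (n : ℝ≥0∞)) .of_discrete hf,
    lintegral_countable']
  simp_rw [Measure.map_apply hf (measurableSet_singleton _)]
  exact ENNReal.tsum_comp_le_tsum_of_injective Nat.cast_injective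
    (fun n : ℕ∞ => (n : ℝ≥0∞) * μ (f ⁻¹' {n}))

theorem tsum_measure_eq_coe_eq_one [IsProbabilityMeasure μ] (hf : Measurable f)
    (hint : ∫⁻ a, (f a : ℝ≥0∞) ∂μ ≠ ⊤) :
    ∑' k : ℕ, μ {a | f a = k} = 1 := by
  have hfin : ∀ᵐ a ∂μ, f a ≠ ⊤ := by
    filter_upwards [ae_lt_top' (Measurable.of_discrete.comp hf).aemeasurable hint] with a ha
    simpa using ha.ne
  have hmeas (k : ℕ) : MeasurableSet {a | f a = k} := hf (measurableSet_singleton _)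
  rw [← measure_iUnion (fun i j hij => Set.disjoint_left.2 fun a hi hj => hij (by simp_all)) hmeas,
    ← prob_compl_eq_zero_iff (MeasurableSet.iUnion hmeas)]
  refine measure_mono_null (fun a ha => ?_) (ae_iff.1 hfin)
  intro hne
  obtain ⟨n, hn⟩ := ENat.ne_top_iff_exists.1 hne
  exact ha (mem_iUnion.2 ⟨n, hn.symm⟩)

end NatValued

namespace Finset

theorem mem_image_sub_iff {T : Finset ℤ} {s u : ℤ} : u ∈ T.image (· - s) ↔ u + s ∈ T := by
  simp [sub_eq_iff_eq_add]

theorem image_sub_image_sub (T : Finset ℤ) (a b : ℤ) :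
    (T.image (· - a)).image (· - b) = T.image (· - (a + b)) := by
  rw [image_image]
  congr 1
  ext x
  simp only [Function.comp_apply]
  ring

theorem min'_image_sub (T : Finset ℤ) (s : ℤ) (h : (T.image (· - s)).Nonempty) :
    (T.image (· - s)).min' h = T.min' h.of_image - s :=
  min'_image (fun _ _ h => sub_le_sub_right h s) T h

theorem min'_eq_zero {N : Finset ℤ} (h0 : 0 ∈ N) (hnn : ∀ t ∈ N, 0 ≤ t) :
    N.min' ⟨0, h0⟩ = 0 :=
  le_antisymm (min'_le N 0 h0) (le_min' N _ 0 hnn)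

end Finset

/-- Every finite `T ∋ 0` is uniquely a translate `N - s` of a set `N` with minimum `0` by one of
its points `s ∈ N`, namely `s = -min T`. -/
def translateEquiv (k : ℕ) :
    (Σ N : {N : Finset ℤ // N.card = k ∧ 0 ∈ N ∧ ∀ t ∈ N, 0 ≤ t}, {s : ℤ // s ∈ N.1}) ≃
      {T : Finset ℤ // T.card = k ∧ 0 ∈ T} where
  toFun x :=
    ⟨x.1.1.image (· - x.2.1), by rw [Finset.card_image_of_injective _ sub_left_injective, x.1.2.1],
      Finset.mem_image.2 ⟨x.2.1, x.2.2, sub_self _⟩⟩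
  invFun T :=
    let m := T.1.min' ⟨0, T.2.2⟩
    ⟨⟨T.1.image (· - m), by rw [Finset.card_image_of_injective _ sub_left_injective, T.2.1],
        Finset.mem_image.2 ⟨m, Finset.min'_mem _ _, sub_self m⟩,
        by simpa using fun t ht => Finset.min'_le T.1 t ht⟩,
      ⟨-m, Finset.mem_image.2 ⟨0, T.2.2, by ring⟩⟩⟩
  left_inv := by
    rintro ⟨⟨N, hk, h0, hnn⟩, ⟨s, hs⟩⟩
    have hm (h) : (N.image (· - s)).min' h = -s := by
      rw [Finset.min'_image_sub, Finset.min'_eq_zero h0 hnn, zero_sub]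
    refine Sigma.subtype_ext (Subtype.ext ?_) ?_
    · dsimp only
      generalize_proofs hne
      rw [hm hne, Finset.image_sub_image_sub, add_neg_cancel]
      simp
    · dsimp only
      generalize_proofs hne
      rw [hm hne, neg_neg]
  right_inv := by
    rintro ⟨T, hk, h0⟩
    refine Subtype.ext ?_
    dsimp only
    rw [Finset.image_sub_image_sub, add_neg_cancel]
    simp

theorem tsum_zero_mem_eq_mul_tsum_nonneg (q : Finset ℤ → ℝ≥0∞)
    (hq : ∀ T s, 0 ∈ T → s ∈ T → q (T.image (· - s)) = q T) (k : ℕ) :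
    ∑' T : {T : Finset ℤ // T.card = k ∧ 0 ∈ T}, q T =
      k * ∑' N : {N : Finset ℤ // N.card = k ∧ 0 ∈ N ∧ ∀ t ∈ N, 0 ≤ t}, q N := by
  rw [← (translateEquiv k).tsum_eq, ENNReal.tsum_sigma', ← ENNReal.tsum_mul_left]
  refine tsum_congr fun N => ?_
  calc ∑' s : {s // s ∈ N.1}, q (N.1.image (· - s.1))
      = ∑' _s : {s // s ∈ N.1}, q N.1 := tsum_congr fun s => hq _ _ N.2.2.1 s.2
    _ = k * q N := by
      rw [Finset.tsum_subtype N.1 (fun _ => q N.1), Finset.sum_const, N.2.1, nsmul_eq_mul]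

section Cylinders

variable {Ω : Type*} {I : ℤ → Ω → Bool}

def cylinderEvent (I : ℤ → Ω → Bool) (F : Finset ℤ) (ε : ℤ → Bool) : Set Ω :=
  {ω | ∀ t ∈ F, I t ω = ε t}

def configEvent (I : ℤ → Ω → Bool) (T : Finset ℤ) : Set Ω :=
  {ω | clusterSet I ω = T}

theorem setOf_exists_clusterSet_eq (I : ℤ → Ω → Bool) (p : Finset ℤ → Prop) :
    {ω | ∃ T : Finset ℤ, p T ∧ clusterSet I ω = T} = ⋃ T : {T // p T}, configEvent I T := by
  ext ω
  simp [configEvent]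

theorem exists_clusterSet_eq_and_iff {ω : Ω} {p : Finset ℤ → Prop} {Q : Set ℤ → Prop} :
    ((∃ T : Finset ℤ, p T ∧ clusterSet I ω = T) ∧ Q (clusterSet I ω)) ↔
      ∃ T : Finset ℤ, (p T ∧ Q T) ∧ clusterSet I ω = T := by
  constructor
  · rintro ⟨⟨T, hp, hT⟩, hQ⟩
    exact ⟨T, ⟨hp, hT ▸ hQ⟩, hT⟩
  · rintro ⟨T, ⟨hp, hQ⟩, hT⟩
    exact ⟨⟨T, hp, hT⟩, hT ▸ hQ⟩

theorem SiFn_eq_coe_iff {ω : Ω} {k : ℕ} :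
    SiFn I ω = k ↔ ∃ T : Finset ℤ, T.card = k ∧ clusterSet I ω = T := by
  change (clusterSet I ω).encard = k ↔ _
  constructor
  · intro h
    have hfin := Set.finite_of_encard_eq_coe h
    refine ⟨hfin.toFinset, ?_, hfin.coe_toFinset.symm⟩
    rw [← Nat.cast_inj (R := ℕ∞), ← h, hfin.encard_eq_coe_toFinset_card]
  · rintro ⟨T, rfl, hT⟩
    rw [hT, Set.encard_coe_eq_coe_finsetCard]

theorem SminusFn_eq_zero_iff {ω : Ω} : SminusFn I ω = 0 ↔ ∀ t ∈ clusterSet I ω, 0 ≤ t := by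
  simp only [SminusFn, clusterSet, encard_eq_zero, eq_empty_iff_forall_notMem, mem_ofPred_eq]
  refine forall_congr' fun t => ?_
  cases I t ω <;> simp

theorem measurableSet_cylinderEvent [MeasurableSpace Ω] (hI : ∀ t, Measurable (I t)) (F : Finset ℤ)
    (ε : ℤ → Bool) : MeasurableSet (cylinderEvent I F ε) := by
  simp only [cylinderEvent, ofPred_forall]
  exact .iInter fun t => .iInter fun _ => hI t (measurableSet_singleton _)

theorem cylinderEvent_antitone (I : ℤ → Ω → Bool) (ε : ℤ → Bool) :
    Antitone (cylinderEvent I · ε) :=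
  fun _ _ hFG _ hω t ht => hω t (hFG ht)

theorem cylinderEvent_image_sub (F : Finset ℤ) (ε : ℤ → Bool) (s : ℤ) :
    cylinderEvent I (F.image (· - s)) (fun u => ε (u + s)) = {ω | ∀ t ∈ F, I (t - s) ω = ε t} := by
  simp [cylinderEvent]

theorem configEvent_eq_iInter (T : Finset ℤ) :
    configEvent I T = ⋂ F : Finset ℤ, cylinderEvent I F (· ∈ T) := by
  ext ω
  simp only [configEvent, clusterSet, Set.ext_iff, mem_iInter, cylinderEvent, mem_ofPred_eq,
    Finset.mem_coe]
  constructor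
  · intro h F t _
    simp [← h t]
  · intro h t
    rw [h {t} t (Finset.mem_singleton_self t), decide_eq_true_iff]

theorem measurableSet_configEvent [MeasurableSpace Ω] (hI : ∀ t, Measurable (I t)) (T : Finset ℤ) :
    MeasurableSet (configEvent I T) := by
  rw [configEvent_eq_iInter]
  exact .iInter fun F => measurableSet_cylinderEvent hI F _

theorem measure_configEvent_eq_iInf [MeasurableSpace Ω] (P : Measure Ω) [IsFiniteMeasure P]
    (hI : ∀ t, Measurable (I t)) (T : Finset ℤ) :
    P (configEvent I T) = ⨅ F : Finset ℤ, P (cylinderEvent I F (· ∈ T)) := by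
  rw [configEvent_eq_iInter]
  exact (cylinderEvent_antitone I _).measure_iInter
    (fun F => (measurableSet_cylinderEvent hI F _).nullMeasurableSet) ⟨∅, measure_ne_top P _⟩

end Cylinders

section PalmIdentity

variable {Ω : Type*} [MeasurableSpace Ω] {P : Measure Ω} {I : ℤ → Ω → Bool}

/-- Seen from any time `s` with `I s = true`, the process looks as it does from time `0`:
the time-change formula of a tail process, on cylinder events. -/
def IsCylinderShiftInvariant (P : Measure Ω) (I : ℤ → Ω → Bool) : Prop :=
  ∀ (F : Finset ℤ) (ε : ℤ → Bool) (s : ℤ), 0 ∈ F → s ∈ F → ε 0 = true → ε s = true →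
    P (cylinderEvent I F ε) = P (cylinderEvent I (F.image (· - s)) (fun u => ε (u + s)))

theorem measure_configEvent_le_image_sub [IsFiniteMeasure P] (hI : ∀ t, Measurable (I t))
    (hshift : IsCylinderShiftInvariant P I) {T : Finset ℤ} {s : ℤ} (h0 : 0 ∈ T) (hs : s ∈ T) :
    P (configEvent I T) ≤ P (configEvent I (T.image (· - s))) := by
  rw [measure_configEvent_eq_iInf P hI, measure_configEvent_eq_iInf P hI]
  refine le_iInf fun G => ?_
  -- `F ⊇ T` keeps the cylinder pinned on `T`, and `F ⊇ G + s` makes its translate refine `G`.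
  let F := G.image (· + s) ∪ T
  have hGF : G ⊆ F.image (· - s) := fun g hg =>
    Finset.mem_image_sub_iff.2 (Finset.mem_union_left _ (Finset.mem_image_of_mem _ hg))
  calc ⨅ F, P (cylinderEvent I F (· ∈ T))
      ≤ P (cylinderEvent I F (· ∈ T)) := iInf_le _ F
    _ = P (cylinderEvent I (F.image (· - s)) (fun u => u + s ∈ T)) :=
        hshift F _ s (Finset.mem_union_right _ h0) (Finset.mem_union_right _ hs)
          (decide_eq_true h0) (decide_eq_true hs)
    _ = P (cylinderEvent I (F.image (· - s)) (· ∈ T.image (· - s))) := by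
        simp only [Finset.mem_image_sub_iff]
    _ ≤ P (cylinderEvent I G (· ∈ T.image (· - s))) :=
        measure_mono (cylinderEvent_antitone I _ hGF)

theorem measure_configEvent_image_sub [IsFiniteMeasure P] (hI : ∀ t, Measurable (I t))
    (hshift : IsCylinderShiftInvariant P I) {T : Finset ℤ} {s : ℤ} (h0 : 0 ∈ T) (hs : s ∈ T) :
    P (configEvent I (T.image (· - s))) = P (configEvent I T) := by
  refine le_antisymm ?_ (measure_configEvent_le_image_sub hI hshift h0 hs)
  have h := measure_configEvent_le_image_sub hI hshift (T := T.image (· - s)) (s := -s)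
    (Finset.mem_image.2 ⟨s, hs, sub_self s⟩) (Finset.mem_image.2 ⟨0, h0, zero_sub s⟩)
  simpa only [Finset.image_sub_image_sub, add_neg_cancel, sub_zero, Finset.image_id'] using h

theorem measure_exists_clusterSet_eq (hI : ∀ t, Measurable (I t)) (p : Finset ℤ → Prop) :
    P {ω | ∃ T : Finset ℤ, p T ∧ clusterSet I ω = T} = ∑' T : {T // p T}, P (configEvent I T) := by
  rw [setOf_exists_clusterSet_eq]
  refine measure_iUnion (fun T T' hT => Set.disjoint_left.2 fun ω h h' => hT ?_)
    (fun T => measurableSet_configEvent hI T)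
  exact Subtype.ext (Finset.coe_injective (h.symm.trans h'))

theorem measurable_SiFn (hI : ∀ t, Measurable (I t)) : Measurable (SiFn I) := by
  refine ENat.measurable_iff.2 fun k => ?_
  have h : SiFn I ⁻¹' {(k : ℕ∞)} = {ω | ∃ T : Finset ℤ, T.card = k ∧ clusterSet I ω = T} := by
    ext ω
    exact SiFn_eq_coe_iff
  rw [h, setOf_exists_clusterSet_eq]
  exact .iUnion fun T => measurableSet_configEvent hI T

theorem measurableSet_SminusFn_eq_zero (hI : ∀ t, Measurable (I t)) :
    MeasurableSet {ω | SminusFn I ω = 0} := by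
  simp only [SminusFn_eq_zero_iff, clusterSet, mem_ofPred_eq]
  exact measurableSet_setOfPred.2 <| Measurable.forall fun t =>
    (measurableSet_setOfPred.1 (hI t (measurableSet_singleton true))).imp measurable_const

theorem measure_SiFn_eq_mul [IsFiniteMeasure P] (hI : ∀ t, Measurable (I t))
    (h0 : P {ω | I 0 ω = false} = 0) (hshift : IsCylinderShiftInvariant P I) (k : ℕ) :
    P {ω | SiFn I ω = k} = k * P ({ω | SiFn I ω = k} ∩ {ω | SminusFn I ω = 0}) := by
  have hconull : P {ω | I 0 ω = true}ᶜ = 0 := by simpa [compl_ofPred] using h0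
  rw [← measure_inter_conull (s := {ω | SiFn I ω = k}) hconull,
    ← measure_inter_conull (s := {ω | SiFn I ω = k} ∩ {ω | SminusFn I ω = 0}) hconull]
  have e1 : {ω | SiFn I ω = k} ∩ {ω | I 0 ω = true} =
      {ω | ∃ T : Finset ℤ, (T.card = k ∧ 0 ∈ T) ∧ clusterSet I ω = T} := by
    ext ω
    exact (and_congr_left' SiFn_eq_coe_iff).trans (exists_clusterSet_eq_and_iff (Q := (0 ∈ ·)))
  have e2 : {ω | SiFn I ω = k} ∩ {ω | SminusFn I ω = 0} ∩ {ω | I 0 ω = true} =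
      {ω | ∃ T : Finset ℤ, (T.card = k ∧ 0 ∈ T ∧ ∀ t ∈ T, 0 ≤ t) ∧ clusterSet I ω = T} := by
    ext ω
    rw [inter_right_comm, mem_inter_iff, e1]
    refine (and_congr_right' SminusFn_eq_zero_iff).trans
      ((exists_clusterSet_eq_and_iff (Q := fun C => ∀ t ∈ C, 0 ≤ t)).trans ?_)
    simp only [and_assoc, Finset.mem_coe, mem_ofPred_eq]
  rw [e1, e2, measure_exists_clusterSet_eq hI, measure_exists_clusterSet_eq hI]
  exact tsum_zero_mem_eq_mul_tsum_nonneg (fun T => P (configEvent I T))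
    (fun T s h0 hs => measure_configEvent_image_sub hI hshift h0 hs) k

theorem tsum_mul_div_le_lintegral_SiFn [IsProbabilityMeasure P] (hI : ∀ t, Measurable (I t))
    (h0 : P {ω | I 0 ω = false} = 0) (hshift : IsCylinderShiftInvariant P I) :
    ∑' k : ℕ, (k : ℝ≥0∞) * (P ({ω | SiFn I ω = k} ∩ {ω | SminusFn I ω = 0}) /
      P {ω | SminusFn I ω = 0}) ≤ ∫⁻ ω, (SiFn I ω : ℝ≥0∞) ∂P := by
  set B := {ω | SminusFn I ω = 0}
  set a : ℕ → ℝ≥0∞ := fun k => P ({ω | SiFn I ω = k} ∩ B)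
  set E := ∫⁻ ω, (SiFn I ω : ℝ≥0∞) ∂P
  rcases eq_or_ne E ⊤ with hE | hE
  · exact hE ▸ le_top
  have hpalm := measure_SiFn_eq_mul hI h0 hshift
  have hmass : ∑' k : ℕ, (k : ℝ≥0∞) * a k = 1 := by
    simpa only [hpalm] using tsum_measure_eq_coe_eq_one (measurable_SiFn hI) hE
  have hsecond : ∑' k : ℕ, (k : ℝ≥0∞) ^ 2 * a k ≤ E := by
    simpa only [hpalm, sq, mul_assoc] using
      tsum_mul_measure_eq_coe_le_lintegral (μ := P) (measurable_SiFn hI)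
  have hB : ∑' k, a k ≤ P B :=
    calc ∑' k, a k ≤ P (⋃ k : ℕ, {ω | SiFn I ω = k} ∩ B) :=
          tsum_meas_le_meas_iUnion_of_disjoint P
            (fun k => (measurable_SiFn hI (measurableSet_singleton _)).inter
              (measurableSet_SminusFn_eq_zero hI))
            (fun i j hij => disjoint_left.2 fun ω hi hj => hij (by simp_all))
      _ ≤ P B := measure_mono (iUnion_subset fun _ => inter_subset_right)
  have key : 1 ≤ E * P B :=
    calc 1 = (∑' k : ℕ, (k : ℝ≥0∞) * a k) ^ 2 := by rw [hmass, one_pow]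
      _ ≤ (∑' k, a k) * ∑' k : ℕ, (k : ℝ≥0∞) ^ 2 * a k := ENNReal.sq_tsum_mul_le _ _
      _ ≤ P B * E := mul_le_mul' hB hsecond
      _ = E * P B := mul_comm _ _
  calc ∑' k : ℕ, (k : ℝ≥0∞) * (a k / P B) = (∑' k : ℕ, (k : ℝ≥0∞) * a k) / P B := by
        simp only [div_eq_mul_inv, ← mul_assoc, ENNReal.tsum_mul_right]
    _ ≤ E := by
        rw [hmass]
        exact ENNReal.div_le_of_le_mul key

end PalmIdentity

section TailLimit

variable {Ω : Type*} [MeasurableSpace Ω] {P : Measure Ω} {I : ℤ → Ω → Bool}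
  {Ωn : ℕ → Type*} [∀ n, MeasurableSpace (Ωn n)] {Pn : ∀ n, Measure (Ωn n)}
  {In : ∀ n, ℤ → Ωn n → Bool}

def TendstoConditionalCylinders (Pn : ∀ n, Measure (Ωn n)) (In : ∀ n, ℤ → Ωn n → Bool)
    (P : Measure Ω) (I : ℤ → Ω → Bool) : Prop :=
  ∀ (F : Finset ℤ) (ε : ℤ → Bool),
    Tendsto (fun n => Pn n (cylinderEvent (In n) F ε ∩ {ω | In n 0 ω = true}) /
      Pn n {ω | In n 0 ω = true}) atTop (nhds (P (cylinderEvent I F ε)))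

theorem measure_I_zero_eq_false_eq_zero (hconv : TendstoConditionalCylinders Pn In P I) :
    P {ω | I 0 ω = false} = 0 := by
  have h := hconv {0} fun _ => false
  have hempty (n : ℕ) : {ω | In n 0 ω = false} ∩ {ω | In n 0 ω = true} = ∅ := by
    ext ω
    simp
  simp only [cylinderEvent, Finset.mem_singleton, forall_eq, hempty, measure_empty,
    ENNReal.zero_div] at h
  exact tendsto_nhds_unique h tendsto_const_nhds

theorem isCylinderShiftInvariant_of_tendsto
    (hstat : ∀ n (F : Finset ℤ) (ε : ℤ → Bool) (k : ℤ),
      Pn n {ω | ∀ t ∈ F, In n t ω = ε t} = Pn n {ω | ∀ t ∈ F, In n (t + k) ω = ε t})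
    (hconv : TendstoConditionalCylinders Pn In P I) : IsCylinderShiftInvariant P I := by
  intro F ε s h0 hs hε0 hεs
  refine tendsto_nhds_unique (hconv F ε) ((hconv _ _).congr fun n => ?_)
  have hsub {G : Finset ℤ} {δ : ℤ → Bool} (hG : 0 ∈ G) (hδ : δ 0 = true) :
      cylinderEvent (In n) G δ ⊆ {ω | In n 0 ω = true} :=
    fun ω hω => (hω 0 hG).trans hδ
  rw [inter_eq_left.2 (hsub h0 hε0),
    inter_eq_left.2 (hsub (G := F.image (· - s)) (Finset.mem_image.2 ⟨s, hs, sub_self s⟩)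
      (by rwa [zero_add])),
    cylinderEvent_image_sub, cylinderEvent, hstat n F ε (-s)]
  simp only [sub_eq_add_neg]

end TailLimit

theorem typical_mean_le_inspected_mean_general
    {Ω : Type*} [MeasurableSpace Ω] (P : Measure Ω) [IsProbabilityMeasure P]
    (I : ℤ → Ω → Bool) (hI : ∀ t, Measurable (I t))
    {Ωn : ℕ → Type*} [∀ n, MeasurableSpace (Ωn n)]
    (Pn : ∀ n, Measure (Ωn n))
    (In : ∀ n, ℤ → Ωn n → Bool)
    -- stationarity of each `(Iₜⁿ)ₜ`
    (hstat : ∀ n (F : Finset ℤ) (ε : ℤ → Bool) (k : ℤ),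
      Pn n {ω | ∀ t ∈ F, In n t ω = ε t} = Pn n {ω | ∀ t ∈ F, In n (t + k) ω = ε t})
    -- convergence of the conditional finite-dimensional distributions
    (hconv : ∀ (F : Finset ℤ) (ε : ℤ → Bool),
      Tendsto (fun n =>
          Pn n ({ω | ∀ t ∈ F, In n t ω = ε t} ∩ {ω | In n 0 ω = true})
            / Pn n {ω | In n 0 ω = true}) atTop
        (nhds (P {ω | ∀ t ∈ F, I t ω = ε t}))) :
    (∑' k : ℕ, (k : ℝ≥0∞) * (P ({ω | SiFn I ω = ((k : ℕ) : ℕ∞)} ∩ {ω | SminusFn I ω = 0}) / P {ω | SminusFn I ω = 0})) ≤ ∫⁻ ω, (SiFn I ω : ℝ≥0∞) ∂P :=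
  tsum_mul_div_le_lintegral_SiFn hI (measure_I_zero_eq_false_eq_zero hconv)
    (isCylinderShiftInvariant_of_tendsto hstat hconv)

/-- Final remark of Section 4: under Assumption 1, if `θ = P(S₊ⁱ = 0) > 0`,
then `E(Sᵗ) ≤ E(Sⁱ)`, without assuming `P(S₊ⁱ < ∞) = 1`. -/
theorem typical_mean_le_inspected_mean
    {Ω : Type*} [MeasurableSpace Ω] (P : Measure Ω) [IsProbabilityMeasure P]
    (I : ℤ → Ω → Bool) (hI : ∀ t, Measurable (I t))
    {Ωn : ℕ → Type*} [∀ n, MeasurableSpace (Ωn n)]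
    (Pn : ∀ n, Measure (Ωn n)) (hPn : ∀ n, IsProbabilityMeasure (Pn n))
    (In : ∀ n, ℤ → Ωn n → Bool) (hIn : ∀ n t, Measurable (In n t))
    -- `P(I₀ⁿ = 1) > 0` for all `n`
    (hpos : ∀ n, 0 < Pn n {ω | In n 0 ω = true})
    -- stationarity of each `(Iₜⁿ)ₜ`
    (hstat : ∀ n (F : Finset ℤ) (ε : ℤ → Bool) (k : ℤ),
      Pn n {ω | ∀ t ∈ F, In n t ω = ε t} = Pn n {ω | ∀ t ∈ F, In n (t + k) ω = ε t})
    -- convergence of the conditional finite-dimensional distributions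
    (hconv : ∀ (F : Finset ℤ) (ε : ℤ → Bool),
      Tendsto (fun n =>
          Pn n ({ω | ∀ t ∈ F, In n t ω = ε t} ∩ {ω | In n 0 ω = true})
            / Pn n {ω | In n 0 ω = true}) atTop
        (nhds (P {ω | ∀ t ∈ F, I t ω = ε t})))

    (hθ : 0 < P {ω | SplusFn I ω = 0}) :
    (∑' k : ℕ, (k : ℝ≥0∞) * (P ({ω | SiFn I ω = ((k : ℕ) : ℕ∞)} ∩ {ω | SminusFn I ω = 0}) / P {ω | SminusFn I ω = 0})) ≤ ∫⁻ ω, (SiFn I ω : ℝ≥0∞) ∂P :=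
  typical_mean_le_inspected_mean_general P I hI Pn In hstat hconv
end
end
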